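/- Suppose the weights $a_{ij}(t)=a_{ji}(t)\ge0$, $a_{ii}(t)=0$, are piecewise-constant in time taking values in a finite set, and the graph $\mathcal{G}(A(t))$ is connected for all $t$. Let $\lambda=\min_{t\ge0}\lambda_2(t)>0$, where $\lambda_2(t)$ is the second smallest Laplacian eigenvalue of the graph with weights $a_{ij}(t)^{2/(1+\alpha)}$. Then along any solution of $\dot x_i=\sum_j a_{ij}(t)\mathrm{sign}(x_j-x_i)|x_j-x_i|^\alpha$ ($0<\alpha<1$), the function $V_2(t)=\tfrac12\|x(t)-\kappa\mathbf{1}\|^2$ with $\kappa=\frac1n\mathbf{1}^Tx(0)$ satisfies $\dot V_2 \le -2^\alpha\lambda^{(1+\alpha)/2}V_2^{(1+\alpha)/2}$, and hence all states reach the initial average $\kappa$ by time $t_3=\frac{2^{1-\alpha}V_2(0)^{(1-\alpha)/2}}{(1-\alpha)\lambda^{(1+\alpha)/2}}$. -/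

import Mathlib

open Finset Matrix

def graphLaplacian {n : ℕ} (A : Matrix (Fin n) (Fin n) ℝ) : Matrix (Fin n) (Fin n) ℝ :=
  fun i j => if i = j then ∑ k ∈ univ.erase i, A i k else -A i j

def WeightConnected {n : ℕ} (A : Matrix (Fin n) (Fin n) ℝ) : Prop :=
  ∀ i j : Fin n, Relation.ReflTransGen (fun a b => 0 < A a b) i j

/-!
The coupling `aᵢⱼ sig(xⱼ - xᵢ)^α` is antisymmetric in `(i, j)`, so `∑ᵢ xᵢ` is conserved and
`y = x - κ𝟙` stays orthogonal to `𝟙`; symmetrising `V₂' = ∑ᵢⱼ aᵢⱼ sig(xⱼ - xᵢ)^α yᵢ` gives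
`V₂' = -½ ∑ᵢⱼ (bᵢⱼ (xⱼ - xᵢ)²)^p` with `bᵢⱼ = aᵢⱼ^(2/(1+α))` and `p = (1+α)/2`. As `r ↦ r^p` is
subadditive, this sum is at least `(∑ᵢⱼ bᵢⱼ (xⱼ - xᵢ)²)^p = (2 yᵀ L_B y)^p`, and `y ⊥ 𝟙` gives
`yᵀ L_B y ≥ λ₂ ‖y‖² ≥ 2 λ V₂` whatever the current topology. Hence `V₂' ≤ -c V₂^p` with `p < 1`,
so `V₂^(1-p) + (1-p) c t` is nonincreasing while `V₂ > 0`, which forces `V₂ = 0` by time `t₃`.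
-/

lemma rpow_sum_le_sum_rpow {ι : Type*} (s : Finset ι) {f : ι → ℝ} (hf : ∀ i ∈ s, 0 ≤ f i)
    {p : ℝ} (hp0 : 0 < p) (hp1 : p ≤ 1) : (∑ i ∈ s, f i) ^ p ≤ ∑ i ∈ s, f i ^ p :=
  le_sum_of_subadditive_on_pred (· ^ p) (0 ≤ ·) (Real.zero_rpow hp0.ne').le
    (fun _ _ hx hy => Real.rpow_add_le_add_rpow hx hy hp0.le hp1) (fun _ _ => add_nonneg) f hf

section Antisymmetric

variable {ι : Type*} [Fintype ι]

lemma sum_sum_mul_sub_of_antisymm {F : ι → ι → ℝ}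
    (hF : ∀ i j, F j i = -F i j) (y : ι → ℝ) :
    ∑ i, ∑ j, F i j * (y j - y i) = -2 * ∑ i, ∑ j, F i j * y i := by
  have hswap : ∑ i, ∑ j, F i j * y j = -∑ i, ∑ j, F i j * y i := by
    rw [sum_comm]
    simp only [← sum_neg_distrib]
    exact sum_congr rfl fun i _ => sum_congr rfl fun j _ => by rw [hF]; ring
  simp only [mul_sub, sum_sub_distrib, hswap]
  ring

lemma sum_sum_eq_zero_of_antisymm {F : ι → ι → ℝ}
    (hF : ∀ i j, F j i = -F i j) : ∑ i, ∑ j, F i j = 0 := by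
  have h := sum_sum_mul_sub_of_antisymm hF (fun _ => 1)
  simp only [sub_self, mul_zero, sum_const_zero, mul_one] at h
  linarith

end Antisymmetric

lemma graphLaplacian_mulVec_apply {n : ℕ} (A : Matrix (Fin n) (Fin n) ℝ) (y : Fin n → ℝ)
    (i : Fin n) : (graphLaplacian A *ᵥ y) i = ∑ j, A i j * (y i - y j) := by
  rw [mulVec, dotProduct, ← add_sum_erase _ _ (mem_univ i), ← add_sum_erase _ _ (mem_univ i)]
  simp only [graphLaplacian, if_pos, sub_self, mul_zero, zero_add, sum_mul, mul_sub,
    ← sum_add_distrib]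
  refine sum_congr rfl fun j hj => ?_
  rw [if_neg (ne_of_mem_erase hj).symm]
  ring

lemma graphLaplacian_mulVec_const {n : ℕ} (A : Matrix (Fin n) (Fin n) ℝ) (c : ℝ) :
    graphLaplacian A *ᵥ (fun _ => c) = 0 := by
  ext i
  simp [graphLaplacian_mulVec_apply]

lemma sum_sum_mul_sub_sq_eq {n : ℕ} {A : Matrix (Fin n) (Fin n) ℝ} (hA : A.IsSymm)
    (y : Fin n → ℝ) :
    ∑ i, ∑ j, A i j * (y j - y i) ^ 2 = 2 * (y ⬝ᵥ graphLaplacian A *ᵥ y) := by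
  have h := sum_sum_mul_sub_of_antisymm (F := fun i j => A i j * (y i - y j))
    (fun i j => by rw [hA.apply]; ring) y
  simp only [dotProduct, graphLaplacian_mulVec_apply, mul_sum]
  have : ∀ i j, A i j * (y j - y i) ^ 2 = -(A i j * (y i - y j) * (y j - y i)) := fun i j => by ring
  simp only [this, sum_neg_distrib, h, neg_mul, neg_neg, mul_sum]
  exact sum_congr rfl fun i _ => sum_congr rfl fun j _ => by ring

section Orthogonal

variable {ι : Type*} [Fintype ι] [DecidableEq ι] {T : Matrix ι ι ℝ}

lemma dotProduct_mulVec_mulVec_of_transpose_mul_self (hT : Tᵀ * T = 1) (v w : ι → ℝ) :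
    (T *ᵥ v) ⬝ᵥ (T *ᵥ w) = v ⬝ᵥ w := by
  rw [← vecMul_transpose, ← dotProduct_mulVec, mulVec_mulVec, hT, one_mulVec]

lemma dotProduct_mulVec_transpose_mul_diagonal_mul (μ y : ι → ℝ) :
    y ⬝ᵥ (Tᵀ * diagonal μ * T) *ᵥ y = ∑ k, μ k * (T *ᵥ y) k ^ 2 := by
  rw [← mulVec_mulVec, ← mulVec_mulVec, dotProduct_mulVec, vecMul_transpose]
  simp only [dotProduct, mulVec_diagonal]
  exact sum_congr rfl fun k _ => by ring

end Orthogonal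

lemma mul_sum_sq_le_dotProduct_mulVec {n : ℕ} (hn : 2 ≤ n) {L T : Matrix (Fin n) (Fin n) ℝ}
    {μ : Fin n → ℝ} (hT : Tᵀ * T = 1) (hL : L = Tᵀ * diagonal μ * T) (hmono : Monotone μ)
    (hμ1 : 0 < μ ⟨1, hn⟩) (hL1 : L *ᵥ (fun _ => 1) = 0) {y : Fin n → ℝ}
    (hy : ∑ i, y i = 0) :
    μ ⟨1, hn⟩ * ∑ i, y i ^ 2 ≤ y ⬝ᵥ L *ᵥ y := by
  set w := T *ᵥ (fun _ => 1)
  have hle : ∀ k : Fin n, k ≠ ⟨0, Nat.zero_lt_of_lt hn⟩ → μ ⟨1, hn⟩ ≤ μ k := fun k hk =>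
    hmono (Fin.mk_le_of_le_val (Nat.one_le_iff_ne_zero.mpr fun h => hk (Fin.ext h)))
  -- `T` conjugates `L` to `diagonal μ`, so `diagonal μ` kills `w = T 1`
  have hDw : diagonal μ *ᵥ w = 0 := by
    have hTL : T * L = diagonal μ * T := by
      rw [hL, ← Matrix.mul_assoc, ← Matrix.mul_assoc, mul_eq_one_comm.mp hT, Matrix.one_mul]
    rw [mulVec_mulVec, ← hTL, ← mulVec_mulVec, hL1, mulVec_zero]
  have hw : ∀ k : Fin n, k ≠ ⟨0, Nat.zero_lt_of_lt hn⟩ → w k = 0 := fun k hk => by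
    have := congrFun hDw k
    rw [mulVec_diagonal, Pi.zero_apply] at this
    exact (mul_eq_zero.mp this).resolve_left (hμ1.trans_le (hle k hk)).ne'
  have hw0 : w ⟨0, Nat.zero_lt_of_lt hn⟩ ≠ 0 := by
    intro h0
    have hww : w ⬝ᵥ w = (fun _ => 1) ⬝ᵥ fun _ => 1 :=
      dotProduct_mulVec_mulVec_of_transpose_mul_self hT _ _
    rw [dotProduct, sum_eq_single _ (fun k _ hk => by rw [hw k hk, zero_mul]) (by simp), h0,
      zero_mul] at hww
    simp [dotProduct, eq_comm] at hww
    omega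
  have hz0 : (T *ᵥ y) ⟨0, Nat.zero_lt_of_lt hn⟩ = 0 := by
    have hwz : w ⬝ᵥ (T *ᵥ y) = (fun _ => 1) ⬝ᵥ y :=
      dotProduct_mulVec_mulVec_of_transpose_mul_self hT _ _
    rw [dotProduct, sum_eq_single _ (fun k _ hk => by rw [hw k hk, zero_mul]) (by simp)] at hwz
    simp only [dotProduct, one_mul, hy] at hwz
    exact (mul_eq_zero.mp hwz).resolve_left hw0
  have hz : ∑ k, (T *ᵥ y) k ^ 2 = ∑ i, y i ^ 2 := by
    simpa only [dotProduct, sq] using dotProduct_mulVec_mulVec_of_transpose_mul_self hT y y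
  rw [hL, dotProduct_mulVec_transpose_mul_diagonal_mul, ← hz, mul_sum]
  refine sum_le_sum fun k _ => ?_
  by_cases hk : k = ⟨0, Nat.zero_lt_of_lt hn⟩
  · rw [hk, hz0]; simp
  · exact mul_le_mul_of_nonneg_right (hle k hk) (sq_nonneg _)

lemma rpow_two_mul_mul_sum_sq_le_sum_sum_rpow {n : ℕ} (hn : 2 ≤ n)
    {A T : Matrix (Fin n) (Fin n) ℝ} {μ : Fin n → ℝ} (hA : A.IsSymm) (hA0 : ∀ i j, 0 ≤ A i j)
    (hT : Tᵀ * T = 1) (hL : graphLaplacian A = Tᵀ * diagonal μ * T) (hmono : Monotone μ)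
    (hμ1 : 0 < μ ⟨1, hn⟩) {lam p : ℝ} (hlam0 : 0 ≤ lam) (hlam : lam ≤ μ ⟨1, hn⟩)
    (hp0 : 0 < p) (hp1 : p ≤ 1) {y : Fin n → ℝ} (hy : ∑ i, y i = 0) :
    (2 * lam * ∑ i, y i ^ 2) ^ p ≤ ∑ i, ∑ j, (A i j * (y j - y i) ^ 2) ^ p := by
  have hterm : ∀ i j, 0 ≤ A i j * (y j - y i) ^ 2 := fun i j => mul_nonneg (hA0 i j) (sq_nonneg _)
  have hgap : 2 * lam * ∑ i, y i ^ 2 ≤ ∑ i, ∑ j, A i j * (y j - y i) ^ 2 := by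
    rw [sum_sum_mul_sub_sq_eq hA, mul_assoc]
    refine mul_le_mul_of_nonneg_left ?_ zero_le_two
    exact (mul_le_mul_of_nonneg_right hlam (sum_nonneg fun i _ => sq_nonneg _)).trans
      (mul_sum_sq_le_dotProduct_mulVec hn hT hL hmono hμ1 (graphLaplacian_mulVec_const A 1) hy)
  calc (2 * lam * ∑ i, y i ^ 2) ^ p
      ≤ (∑ i, ∑ j, A i j * (y j - y i) ^ 2) ^ p :=
        Real.rpow_le_rpow (by positivity) hgap hp0.le
    _ ≤ ∑ i, (∑ j, A i j * (y j - y i) ^ 2) ^ p :=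
        rpow_sum_le_sum_rpow _ (fun i _ => sum_nonneg fun j _ => hterm i j) hp0 hp1
    _ ≤ ∑ i, ∑ j, (A i j * (y j - y i) ^ 2) ^ p :=
        sum_le_sum fun i _ => rpow_sum_le_sum_rpow _ (fun j _ => hterm i j) hp0 hp1

noncomputable def signedRpow (α d : ℝ) : ℝ := Real.sign d * |d| ^ α

lemma signedRpow_neg (α d : ℝ) : signedRpow α (-d) = -signedRpow α d := by
  rw [signedRpow, signedRpow, Real.sign_neg, abs_neg, neg_mul]

lemma signedRpow_mul_self {α : ℝ} (hα : 1 + α ≠ 0) (d : ℝ) :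
    signedRpow α d * d = |d| ^ (1 + α) := by
  rcases lt_trichotomy d 0 with h | rfl | h
  · rw [signedRpow, Real.sign_of_neg h, abs_of_neg h, Real.rpow_add' (by linarith) hα,
      Real.rpow_one]
    ring
  · simp [Real.zero_rpow hα]
  · rw [signedRpow, Real.sign_of_pos h, abs_of_pos h, Real.rpow_add' h.le hα, Real.rpow_one]
    ring

lemma mul_signedRpow_mul_self {α a : ℝ} (hα : 0 < 1 + α) (ha : 0 ≤ a) (d : ℝ) :
    a * signedRpow α d * d = (a ^ (2 / (1 + α)) * d ^ 2) ^ ((1 + α) / 2) := by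
  rw [Real.mul_rpow (Real.rpow_nonneg ha _) (sq_nonneg d), ← Real.rpow_mul ha, ← sq_abs,
    ← Real.rpow_natCast, ← Real.rpow_mul (abs_nonneg d), mul_assoc, signedRpow_mul_self hα.ne']
  congr 2 <;> field_simp
  · exact (Real.rpow_one a).symm
  · norm_num

lemma sum_sub_div_card_eq_zero {n : ℕ} (hn : n ≠ 0) {v w : Fin n → ℝ} (h : ∑ i, w i = ∑ i, v i) :
    ∑ i, (w i - (∑ j, v j) / n) = 0 := by
  rw [sum_sub_distrib, h, sum_const, card_univ, Fintype.card_fin, nsmul_eq_mul]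
  field_simp
  ring

lemma eq_of_half_sum_sq_sub_eq_zero {ι : Type*} [Fintype ι] {w : ι → ℝ} {κ : ℝ}
    (h : 1 / 2 * ∑ i, (w i - κ) ^ 2 = 0) (i : ι) : w i = κ := by
  have hi := (sum_eq_zero_iff_of_nonneg fun j _ => sq_nonneg (w j - κ)).mp (by linarith) i
    (mem_univ i)
  linarith [pow_eq_zero_iff two_ne_zero |>.mp hi]

section Consensus

variable {ι : Type*} {g : ℝ → ℝ}

lemma mul_apply_sub_antisymm {A : Matrix ι ι ℝ} (hA : A.IsSymm) (hg : ∀ d, g (-d) = -g d)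
    (y : ι → ℝ) (i j : ι) : A j i * g (y i - y j) = -(A i j * g (y j - y i)) := by
  rw [hA.apply, ← neg_sub, hg, mul_neg]

variable [Fintype ι] {a : ℝ → Matrix ι ι ℝ} {x : ℝ → ι → ℝ}

lemma sum_eq_sum_zero_of_odd_coupling (ha : ∀ t, (a t).IsSymm)
    (hg : ∀ d, g (-d) = -g d)
    (hode : ∀ t i, HasDerivAt (fun s => x s i) (∑ j, a t i j * g (x t j - x t i)) t) (t : ℝ) :
    ∑ i, x t i = ∑ i, x 0 i := by
  have hsum : ∀ t, HasDerivAt (fun s => ∑ i, x s i) 0 t := fun t =>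
    (HasDerivAt.fun_sum fun i (_ : i ∈ univ) => hode t i).congr_deriv
      (sum_sum_eq_zero_of_antisymm (mul_apply_sub_antisymm (ha t) hg (x t)))
  exact is_const_of_deriv_eq_zero (fun s => (hsum s).differentiableAt) (fun s => (hsum s).deriv)
    t 0

lemma hasDerivAt_half_sum_sq_sub_of_odd_coupling (ha : ∀ t, (a t).IsSymm)
    (hg : ∀ d, g (-d) = -g d)
    (hode : ∀ t i, HasDerivAt (fun s => x s i) (∑ j, a t i j * g (x t j - x t i)) t)
    (κ t : ℝ) :
    HasDerivAt (fun s => 1 / 2 * ∑ i, (x s i - κ) ^ 2)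
      (-(1 / 2) * ∑ i, ∑ j, a t i j * g (x t j - x t i) * (x t j - x t i)) t := by
  have h := (HasDerivAt.fun_sum fun i (_ : i ∈ univ) =>
    ((hode t i).sub_const κ).pow 2).const_mul (1 / 2 : ℝ)
  refine h.congr_deriv ?_
  have hpair := sum_sum_mul_sub_of_antisymm (mul_apply_sub_antisymm (ha t) hg (x t))
    (fun i => x t i - κ)
  simp only [sub_sub_sub_cancel_right] at hpair
  rw [hpair]
  simp only [Finset.mul_sum]
  exact sum_congr rfl fun i _ => sum_congr rfl fun j _ => by push_cast; ring

lemma hasDerivAt_half_sum_sq_sub_signedRpow {α : ℝ} (hα : 0 < 1 + α) (ha : ∀ t, (a t).IsSymm)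
    (ha0 : ∀ t i j, 0 ≤ a t i j)
    (hode : ∀ t i, HasDerivAt (fun s => x s i) (∑ j, a t i j * signedRpow α (x t j - x t i)) t)
    (κ t : ℝ) :
    HasDerivAt (fun s => 1 / 2 * ∑ i, (x s i - κ) ^ 2)
      (-(1 / 2) * ∑ i, ∑ j, (a t i j ^ (2 / (1 + α)) * (x t j - x t i) ^ 2) ^ ((1 + α) / 2)) t :=
  (hasDerivAt_half_sum_sq_sub_of_odd_coupling ha (signedRpow_neg α) hode κ t).congr_deriv
    (by simp only [mul_signedRpow_mul_self hα (ha0 t _ _)])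

end Consensus

section Comparison

open Set

lemma rpow_one_sub_add_le_of_deriv_le {V : ℝ → ℝ} {c p t : ℝ} (hV : Differentiable ℝ V)
    (hp1 : p < 1) (ht : 0 ≤ t) (hpos : ∀ s ∈ Icc 0 t, 0 < V s)
    (hderiv : ∀ s ∈ Ioo 0 t, deriv V s ≤ -c * V s ^ p) :
    V t ^ (1 - p) + (1 - p) * c * t ≤ V 0 ^ (1 - p) := by
  have hG : ∀ s ∈ Icc 0 t, HasDerivAt (fun s => V s ^ (1 - p) + (1 - p) * c * s)
      (deriv V s * (1 - p) * V s ^ (1 - p - 1) + (1 - p) * c) s := fun s hs =>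
    ((hV s).hasDerivAt.rpow_const (Or.inl (hpos s hs).ne')).add
      ((hasDerivAt_id s).const_mul _ |>.congr_deriv (mul_one _))
  have hanti : AntitoneOn (fun s => V s ^ (1 - p) + (1 - p) * c * s) (Icc 0 t) := by
    refine antitoneOn_of_deriv_nonpos (convex_Icc 0 t)
      (fun s hs => (hG s hs).continuousAt.continuousWithinAt)
      (fun s hs => (hG s (interior_subset hs)).differentiableAt.differentiableWithinAt)
      fun s hs => ?_
    rw [interior_Icc] at hs
    have hVs := hpos s (Ioo_subset_Icc_self hs)
    -- `(V ^ (1 - p))' = (1 - p) V' / V ^ p ≤ -(1 - p) c`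
    have hcancel : V s ^ (1 - p - 1) * V s ^ p = 1 := by
      rw [← Real.rpow_add hVs, sub_sub_cancel_left, neg_add_cancel, Real.rpow_zero]
    have hrate : deriv V s * V s ^ (1 - p - 1) ≤ -c :=
      (mul_le_mul_of_nonneg_right (hderiv s hs) (Real.rpow_nonneg hVs.le _)).trans_eq
        (by rw [mul_assoc, mul_comm (V s ^ p), hcancel, mul_one])
    rw [(hG s (Ioo_subset_Icc_self hs)).deriv]
    linarith [mul_le_mul_of_nonneg_left hrate (sub_nonneg.mpr hp1.le)]
  simpa only [mul_zero, add_zero] using hanti ⟨le_rfl, ht⟩ ⟨ht, le_rfl⟩ ht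

lemma eq_zero_of_deriv_le_neg_mul_rpow {V : ℝ → ℝ} {c p : ℝ} (hV : Differentiable ℝ V)
    (hV0 : ∀ t, 0 ≤ V t) (hc : 0 < c) (hp1 : p < 1)
    (hderiv : ∀ t, 0 ≤ t → deriv V t ≤ -c * V t ^ p) {t : ℝ}
    (ht : V 0 ^ (1 - p) / ((1 - p) * c) ≤ t) : V t = 0 := by
  have hpc : 0 < (1 - p) * c := mul_pos (by linarith) hc
  have ht0 : 0 ≤ t := (div_nonneg (Real.rpow_nonneg (hV0 0) _) hpc.le).trans ht
  have hanti : AntitoneOn V (Ici 0) :=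
    antitoneOn_of_deriv_nonpos (convex_Ici 0) hV.continuous.continuousOn hV.differentiableOn
      fun s hs => (hderiv s (interior_subset hs)).trans
        (by nlinarith [Real.rpow_nonneg (hV0 s) p])
  by_contra hne
  have hpos : 0 < V t := (hV0 t).lt_of_ne' hne
  have key := rpow_one_sub_add_le_of_deriv_le hV hp1 ht0
    (fun s hs => hpos.trans_le (hanti hs.1 (mem_Ici.mpr ht0) hs.2))
    fun s hs => hderiv s hs.1.le
  rw [div_le_iff₀ hpc] at ht
  linarith [Real.rpow_pos_of_pos hpos (1 - p)]

end Comparison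

lemma rpow_two_mul_mul_two_mul {α u v : ℝ} (hu : 0 ≤ u) (hv : 0 ≤ v) :
    (2 * u * (2 * v)) ^ ((1 + α) / 2) = 2 * (2 ^ α * u ^ ((1 + α) / 2)) * v ^ ((1 + α) / 2) := by
  rw [show 2 * u * (2 * v) = (2 : ℝ) ^ (2 : ℝ) * u * v by norm_num; ring,
    Real.mul_rpow (by positivity) hv, Real.mul_rpow (by positivity) hu, ← Real.rpow_mul zero_le_two,
    show (2 : ℝ) * ((1 + α) / 2) = 1 + α by ring, Real.rpow_add two_pos, Real.rpow_one]
  ring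

theorem finite_time_average_agreement_switching {n : ℕ} (hn : 2 ≤ n)
    (a : ℝ → Matrix (Fin n) (Fin n) ℝ)
    (hsymm : ∀ t, (a t).IsSymm) (hnonneg : ∀ t i j, 0 ≤ a t i j)
    (α : ℝ) (hα0 : 0 < α) (hα1 : α < 1)
    (B : ℝ → Matrix (Fin n) (Fin n) ℝ)
    (hB : ∀ t i j, B t i j = a t i j ^ (2 / (1 + α)))
    -- at each time `t`, `μ t` lists the eigenvalues of the Laplacian of `B t`
    -- in increasing order, so `μ t ⟨1, _⟩ = λ₂(t)`:
    (μ : ℝ → Fin n → ℝ) (T : ℝ → Matrix (Fin n) (Fin n) ℝ)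
    (hT : ∀ t, (T t)ᵀ * T t = 1)
    (hdiagz : ∀ t, graphLaplacian (B t) = (T t)ᵀ * Matrix.diagonal (μ t) * T t)
    (hmono : ∀ t, Monotone (μ t))
    (hμ2 : ∀ t, 0 < μ t ⟨1, by omega⟩)
    -- `lam` is the minimum over `t ≥ 0` of the second smallest eigenvalues `λ₂(t)`:
    (lam : ℝ)
    (hlam : IsLeast {r : ℝ | ∃ t : ℝ, 0 ≤ t ∧ r = μ t ⟨1, by omega⟩} lam)
    (x : ℝ → Fin n → ℝ)
    (hode : ∀ (t : ℝ) (i : Fin n), HasDerivAt (fun s => x s i)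
      (∑ j, a t i j * Real.sign (x t j - x t i) * |x t j - x t i| ^ α) t)
    (κ : ℝ) (hκ : κ = (∑ i, x 0 i) / n)
    (V2 : ℝ → ℝ)
    (hV2 : V2 = fun t => (1 / 2) * ∑ i, (x t i - κ) ^ 2) :
    (∀ t : ℝ, 0 ≤ t → 0 < V2 t →
        deriv V2 t ≤ -(2 ^ α * lam ^ ((1 + α) / 2)) * V2 t ^ ((1 + α) / 2)) ∧
      (∀ t : ℝ,
        2 ^ (1 - α) * V2 0 ^ ((1 - α) / 2) / ((1 - α) * lam ^ ((1 + α) / 2)) ≤ t →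
        ∀ i : Fin n, x t i = κ) := by
  have hp0 : 0 < (1 + α) / 2 := by linarith
  have hp1 : (1 + α) / 2 < 1 := by linarith
  have hlam0 : 0 < lam := by
    obtain ⟨t, -, rfl⟩ := hlam.1
    exact hμ2 t
  have hode' : ∀ t i, HasDerivAt (fun s => x s i)
      (∑ j, a t i j * signedRpow α (x t j - x t i)) t :=
    fun t i => (hode t i).congr_deriv (sum_congr rfl fun j _ => mul_assoc _ _ _)
  have hBsymm : ∀ t, (B t).IsSymm := fun t => IsSymm.ext fun i j => by rw [hB, hB, (hsymm t).apply]
  have hBnn : ∀ t i j, 0 ≤ B t i j := fun t i j => hB t i j ▸ Real.rpow_nonneg (hnonneg t i j) _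
  have hmean : ∀ t, ∑ i, (x t i - κ) = 0 := fun t => hκ ▸ sum_sub_div_card_eq_zero (by omega)
    (sum_eq_sum_zero_of_odd_coupling hsymm (signedRpow_neg α) hode' t)
  have hV2' : ∀ t, HasDerivAt V2
      (-(1 / 2) * ∑ i, ∑ j, (B t i j * (x t j - x t i) ^ 2) ^ ((1 + α) / 2)) t := fun t => by
    simpa only [hV2, ← hB] using
      hasDerivAt_half_sum_sq_sub_signedRpow (by linarith) hsymm hnonneg hode' κ t
  have hV2nn : ∀ t, 0 ≤ V2 t := fun t => by rw [hV2]; positivity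
  have hdecay : ∀ t, 0 ≤ t →
      deriv V2 t ≤ -(2 ^ α * lam ^ ((1 + α) / 2)) * V2 t ^ ((1 + α) / 2) := fun t ht => by
    have hdis := rpow_two_mul_mul_sum_sq_le_sum_sum_rpow hn (hBsymm t) (hBnn t) (hT t)
      (hdiagz t) (hmono t) (hμ2 t) hlam0.le (hlam.2 ⟨t, ht, rfl⟩) hp0 hp1.le (hmean t)
    have hsq : ∑ i, (x t i - κ) ^ 2 = 2 * V2 t := by rw [hV2]; ring
    simp only [sub_sub_sub_cancel_right] at hdis
    rw [hsq, rpow_two_mul_mul_two_mul hlam0.le (hV2nn t)] at hdis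
    rw [(hV2' t).deriv]
    linarith
  have ht3 : 2 ^ (1 - α) * V2 0 ^ ((1 - α) / 2) / ((1 - α) * lam ^ ((1 + α) / 2)) =
      V2 0 ^ (1 - (1 + α) / 2) / ((1 - (1 + α) / 2) * (2 ^ α * lam ^ ((1 + α) / 2))) := by
    rw [show 1 - (1 + α) / 2 = (1 - α) / 2 by ring, Real.rpow_sub two_pos, Real.rpow_one]
    field_simp
  refine ⟨fun t ht _ => hdecay t ht, fun t ht i => ?_⟩
  have hV : V2 t = 0 := eq_zero_of_deriv_le_neg_mul_rpow (fun s => (hV2' s).differentiableAt)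
    hV2nn (by positivity) hp1 hdecay (ht3 ▸ ht)
  rw [hV2] at hV
  exact eq_of_half_sum_sq_sub_eq_zero hV i
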